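/- arXiv:1707.06465 — 4 statements merged into one kernel-verified Lean document; each statement's English description precedes it below -/
import Mathlib

section
/- Let U be the multilinear extension of a function u on the joint action set of a finite N-player game, fix a player i and a set B ⊆ Δ, and let c := inf_{σ ∈ B} min_{a ∈ Y_i} σ_i(a). Then for every σ ∈ B and every best response ξ_i ∈ BR_i(σ_{−i}): Σ_{a∈Y_i} (ξ_i(a) − σ_i(a))·U(a, σ_{−i}) ≥ c · Σ_{a∈Y_i} (max_{b∈Y_i} U(b, σ_{−i}) − U(a, σ_{−i})). (Equivalently, in the X-coordinates of the paper: z_i·∇_{x_i}U(x) ≥ c‖∇_{x_i}U(x)‖₁ for all z_i ∈ BR_i(x_{−i}) − x_i, where c is the distance from the projection of B onto player i's strategy set to its boundary.) -/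
open Function

namespace BRGameDelta

variable {ι : Type} [Fintype ι] [DecidableEq ι]
variable {Y : ι → Type} [∀ i, Fintype (Y i)]

/-- Joint pure-strategy profiles. -/
abbrev Prof (Y : ι → Type) := ∀ i, Y i

/-- (Possibly non-normalized) mixed-strategy profiles; player `i`'s mixed strategies are
the members of `simplex Y i`. -/
abbrev Mixed (Y : ι → Type) := ∀ i, Y i → ℝ

/-- The probability simplex `Δ_i` over `Y i`. -/
def simplex (Y : ι → Type) [∀ i, Fintype (Y i)] (i : ι) : Set (Y i → ℝ) :=
  {p | (∀ a, 0 ≤ p a) ∧ ∑ a, p a = 1}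

/-- Multilinear extension `U` of `u`. -/
def Uext (u : Prof Y → ℝ) (σ : Mixed Y) : ℝ :=
  ∑ y : Prof Y, u y * ∏ i, σ i (y i)

/-- The point mass at `a ∈ Y i`. -/
def delta [∀ i, DecidableEq (Y i)] (i : ι) (a : Y i) : Y i → ℝ :=
  fun b => if b = a then 1 else 0

lemma prod_update (i : ι) (σ : Mixed Y) (p : Y i → ℝ) (y : Prof Y) :
    ∏ j, update σ i p j (y j) = p (y i) * ∏ j ∈ Finset.univ.erase i, σ j (y j) := by
  rw [← Finset.mul_prod_erase Finset.univ (fun j => update σ i p j (y j)) (Finset.mem_univ i)]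
  simp only [update_self]
  congr 1
  refine Finset.prod_congr rfl fun j hj => ?_
  rw [update_of_ne (Finset.ne_of_mem_erase hj)]

lemma Uext_update_linear [∀ i, DecidableEq (Y i)] (u : Prof Y → ℝ) (i : ι)
    (σ : Mixed Y) (τ : Y i → ℝ) :
    Uext u (update σ i τ) = ∑ a : Y i, τ a * Uext u (update σ i (delta i a)) := by
  unfold Uext
  simp only [Finset.mul_sum]
  rw [Finset.sum_comm]
  refine Finset.sum_congr rfl fun y _ => ?_
  simp only [prod_update, delta]
  have h : ∀ a : Y i, τ a * (u y * ((if y i = a then (1:ℝ) else 0)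
      * ∏ j ∈ Finset.univ.erase i, σ j (y j)))
      = if y i = a then τ a * (u y * ∏ j ∈ Finset.univ.erase i, σ j (y j)) else 0 := by
    intro a; by_cases hya : y i = a <;> simp [hya]
  rw [Finset.sum_congr rfl fun a _ => h a, Finset.sum_ite_eq]
  simp only [Finset.mem_univ, if_true]
  ring

/-- **Lemma 4.1.** For `B ⊆ Δ` and `c := inf_{σ ∈ B} min_{a ∈ Y i} σ_i(a)`, every best
response `ξ` of player `i` to `σ ∈ B` satisfies
`Σ_a (ξ(a) − σ_i(a))·U(a, σ₋ᵢ) ≥ c · Σ_a (max_b U(b, σ₋ᵢ) − U(a, σ₋ᵢ))`. -/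
theorem best_response_potential_inequality
    [∀ i, DecidableEq (Y i)] [∀ i, Nonempty (Y i)]
    (u : Prof Y → ℝ) (i : ι) (B : Set (Mixed Y))
    (hB : ∀ σ ∈ B, ∀ j, σ j ∈ simplex Y j)
    (c : ℝ) (hc : c = sInf {r : ℝ | ∃ σ ∈ B, ∃ a : Y i, r = σ i a})
    (σ : Mixed Y) (hσ : σ ∈ B) (ξ : Y i → ℝ)
    (hξmem : ξ ∈ simplex Y i)
    (hξBR : ∀ τ ∈ simplex Y i, Uext u (update σ i τ) ≤ Uext u (update σ i ξ)) :
    c * ∑ a : Y i, ((⨆ b : Y i, Uext u (update σ i (delta i b)))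
        - Uext u (update σ i (delta i a)))
      ≤ ∑ a : Y i, (ξ a - σ i a) * Uext u (update σ i (delta i a)) := by
  set g : Y i → ℝ := fun a => Uext u (update σ i (delta i a)) with hg
  set M : ℝ := ⨆ b : Y i, g b with hM
  obtain ⟨hσpos, hσsum⟩ := hB σ hσ i
  obtain ⟨hξpos, hξsum⟩ := hξmem
  have hδ : ∀ a : Y i, delta i a ∈ simplex Y i := by
    intro a
    constructor
    · intro b; unfold delta; positivity
    · simp [delta]
  have hle : ∀ a, g a ≤ M := fun a => le_ciSup (Set.Finite.bddAbove (Set.finite_range g)) a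
  -- c ≤ σ i a for every a
  have hca : ∀ a : Y i, c ≤ σ i a := by
    intro a
    rw [hc]
    apply csInf_le
    · refine ⟨0, fun r hr => ?_⟩
      obtain ⟨σ', hσ', a', rfl⟩ := hr
      exact (hB σ' hσ' i).1 a'
    · exact ⟨σ, hσ, a, rfl⟩
  -- M ≤ ∑ ξ a * g a
  have hMle : M ≤ ∑ a, ξ a * g a := by
    obtain ⟨b, hb⟩ := Finite.exists_max g
    have h1 : M ≤ g b := ciSup_le hb
    have h2 : g b ≤ Uext u (update σ i ξ) := hξBR _ (hδ b)
    rw [Uext_update_linear u i σ ξ] at h2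
    exact h1.trans h2
  have key : c * ∑ a : Y i, (M - g a) ≤ ∑ a : Y i, σ i a * (M - g a) := by
    rw [Finset.mul_sum]
    refine Finset.sum_le_sum fun a _ => ?_
    exact mul_le_mul_of_nonneg_right (hca a) (sub_nonneg.2 (hle a))
  calc c * ∑ a : Y i, (M - g a) ≤ ∑ a : Y i, σ i a * (M - g a) := key
    _ = M - ∑ a, σ i a * g a := by
        simp only [mul_sub, Finset.sum_sub_distrib, ← Finset.sum_mul, hσsum, one_mul]
    _ ≤ ∑ a, ξ a * g a - ∑ a, σ i a * g a := by linarith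
    _ = ∑ a : Y i, (ξ a - σ i a) * g a := by
        rw [← Finset.sum_sub_distrib]; exact Finset.sum_congr rfl fun a _ => by ring

end BRGameDelta
end

section
/- Let Γ be a weighted potential game with multilinear potential U on the mixed-strategy space X ⊂ ℝ^κ, and let x* ∈ X be a completely mixed Nash equilibrium at which the full κ×κ Hessian D²U(x*) is non-singular. Then there exist c > 0 and a neighborhood V of x* in X such that for every x ∈ V and every ξ ∈ BR(x), ∇U(x)·(ξ − x) ≥ c·‖x − x*‖. Consequently, along any BR process x(·) that remains in V one has (d/dt)U(x(t)) ≥ c·‖x(t) − x*‖ for almost every t. -/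
open MeasureTheory Set Function Filter Topology
open scoped ENNReal

namespace BRGame

variable {ι : Type} [Fintype ι] [DecidableEq ι]
variable {A : ι → Type} [∀ i, Fintype (A i)] [∀ i, DecidableEq (A i)]

/-- Joint pure-strategy profiles: player `i`'s action set is `Option (A i)`
(`none` plays the role of the distinguished action dropped in `X`-coordinates,
so `K i = Fintype.card (A i) + 1` and `κ = ∑ i, Fintype.card (A i)`). -/
abbrev PureProf (A : ι → Type) := ∀ i, Option (A i)

/-- Mixed strategies in the `X`-coordinates of the paper:  `Strat A ≃ ℝ^κ`. -/
abbrev Strat (A : ι → Type) := ∀ i, A i → ℝ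

/-- The probability that `x` assigns to action `o` of player `i`. -/
def coord (x : Strat A) (i : ι) : Option (A i) → ℝ
  | none => 1 - ∑ a, x i a
  | some a => x i a

/-- Player `i`'s strategy set `X_i`. -/
def Xi (A : ι → Type) [∀ i, Fintype (A i)] (i : ι) : Set (A i → ℝ) :=
  {xi | (∀ a, 0 ≤ xi a) ∧ ∑ a, xi a ≤ 1}

/-- The joint mixed-strategy space `X ⊆ ℝ^κ`. -/
def mixedX : Set (Strat A) := {x | ∀ i, x i ∈ Xi A i}

/-- Multilinear extension of `f` to the mixed-strategy space. -/
def mlext (f : PureProf A → ℝ) (x : Strat A) : ℝ :=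
  ∑ y : PureProf A, f y * ∏ i, coord x i (y i)

/-- The `X`-coordinates of the point mass at action `o`. -/
def pureVec (i : ι) (o : Option (A i)) : A i → ℝ :=
  fun a => if some a = o then 1 else 0

/-- `x` is a pure strategy profile. -/
def IsPureStrat (x : Strat A) : Prop :=
  ∃ y : PureProf A, ∀ i, x i = pureVec i (y i)

/-- Best responses of player `i` (with payoff extension `mlext f`) to `x₋ᵢ`. -/
def BRi (f : PureProf A → ℝ) (x : Strat A) (i : ι) : Set (A i → ℝ) :=
  {zi | zi ∈ Xi A i ∧ ∀ zi' ∈ Xi A i,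
    mlext f (Function.update x i zi') ≤ mlext f (Function.update x i zi)}

/-- Joint best-response set for the game with utilities `util`. -/
def BRset (util : ι → PureProf A → ℝ) (x : Strat A) : Set (Strat A) :=
  {z | ∀ i, z i ∈ BRi (util i) x i}

/-- Nash equilibrium: `x ∈ BR(x)`. -/
def IsNE (util : ι → PureProf A → ℝ) (x : Strat A) : Prop :=
  x ∈ BRset util x

/-- `u` is a weighted potential for the game `util`, with positive weights `w`. -/
def IsWeightedPotential (util : ι → PureProf A → ℝ) (w : ι → ℝ)
    (u : PureProf A → ℝ) : Prop :=
  (∀ i, 0 < w i) ∧ ∀ (i : ι) (y : PureProf A) (o : Option (A i)),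
    util i (Function.update y i o) - util i y
      = w i * (u (Function.update y i o) - u y)

/-- First-order non-degeneracy of an equilibrium: every pure best response of every
player lies in the carrier (support) of the equilibrium. -/
def FirstOrderNonDegen (util : ι → PureProf A → ℝ) (xs : Strat A) : Prop :=
  ∀ (i : ι) (o : Option (A i)), pureVec i o ∈ BRi (util i) xs i → coord xs i o ≠ 0

/-- Directions tangent (at `xs`) to the face of `X` determined by the carrier of `xs`:
the coordinates outside the carrier are frozen, and if the distinguished action `none`
is outside the carrier the coordinates of each player must sum to zero. -/
def tangentSpace (xs : Strat A) : Set (Strat A) :=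
  {v | ∀ i, (∀ a, coord xs i (some a) = 0 → v i a = 0) ∧
        (coord xs i none = 0 → ∑ a, v i a = 0)}

/-- Second-order non-degeneracy: the Hessian `H̃` of the potential restricted to the
face of `X` containing `xs` is non-singular. -/
def SecondOrderNonDegen (u : PureProf A → ℝ) (xs : Strat A) : Prop :=
  ∀ v ∈ tangentSpace xs, v ≠ 0 →
    ∃ w ∈ tangentSpace xs, fderiv ℝ (fderiv ℝ (mlext u)) xs v w ≠ 0

/-- A regular (finite, weighted) potential game: a weighted potential game all of whose
Nash equilibria are first- and second-order non-degenerate. -/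
def IsRegularPotentialGame (util : ι → PureProf A → ℝ) (u : PureProf A → ℝ) : Prop :=
  (∃ w : ι → ℝ, IsWeightedPotential util w u) ∧
  ∀ xs : Strat A, IsNE util xs →
    FirstOrderNonDegen util xs ∧ SecondOrderNonDegen u xs

/-- A solution of the best-response dynamics `ẋ ∈ BR(x) − x` on `[0,∞)`: an absolutely
continuous curve in `X` whose a.e. derivative `v` satisfies `x + v ∈ BR(x)`. -/
def IsBRProcess (util : ι → PureProf A → ℝ) (x : ℝ → Strat A) : Prop :=
  (∀ t, 0 ≤ t → x t ∈ mixedX) ∧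
  ∃ v : ℝ → Strat A, LocallyIntegrableOn v (Ici 0) volume ∧
    (∀ t, 0 ≤ t → x t = x 0 + ∫ s in Ioc (0:ℝ) t, v s) ∧
    (∀ᵐ s ∂(volume.restrict (Ici (0:ℝ))), x s + v s ∈ BRset util (x s))

set_option linter.unusedSectionVars false

/-! ### Auxiliary machinery -/

section Aux

variable (i : ι)

/-- Linear part of `coord` in player `i`'s block. -/
def lco (w : A i → ℝ) : Option (A i) → ℝ
  | none => -∑ a, w a
  | some a => w a

lemma lco_sum (w : A i → ℝ) : ∑ o : Option (A i), lco i w o = 0 := by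
  rw [Fintype.sum_option]
  simp [lco]

lemma lco_smul (t : ℝ) (w : A i → ℝ) (o : Option (A i)) :
    lco i (t • w) o = t * lco i w o := by
  cases o with
  | none => simp [lco, Finset.mul_sum]
  | some a => simp [lco]

lemma lco_zero (o : Option (A i)) : lco i (0 : A i → ℝ) o = 0 := by
  cases o <;> simp [lco]

end Aux

/-- The linear form in player `i`'s block of the multilinear extension at `x`. -/
def Lpart (f : PureProf A → ℝ) (x : Strat A) (i : ι) (w : A i → ℝ) : ℝ :=
  ∑ y : PureProf A,
    f y * ((∏ j ∈ Finset.univ.erase i, coord x j (y j)) * lco i w (y i))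

lemma Lpart_smul (f : PureProf A → ℝ) (x : Strat A) (i : ι) (t : ℝ) (w : A i → ℝ) :
    Lpart f x i (t • w) = t * Lpart f x i w := by
  unfold Lpart
  rw [Finset.mul_sum]
  refine Finset.sum_congr rfl fun y _ => ?_
  rw [lco_smul]
  ring

lemma Lpart_zero (f : PureProf A → ℝ) (x : Strat A) (i : ι) :
    Lpart f x i 0 = 0 := by
  unfold Lpart
  refine Finset.sum_eq_zero fun y _ => ?_
  rw [lco_zero, mul_zero, mul_zero]

lemma coord_update_same (x : Strat A) (i : ι) (z : A i → ℝ) (o : Option (A i)) :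
    coord (Function.update x i z) i o = coord x i o + lco i (z - x i) o := by
  cases o with
  | none =>
    simp only [coord, lco, Function.update_self, Pi.sub_apply, Finset.sum_sub_distrib]
    ring
  | some a =>
    simp [coord, lco]

lemma coord_update_ne (x : Strat A) (i j : ι) (h : j ≠ i) (z : A i → ℝ)
    (o : Option (A j)) : coord (Function.update x i z) j o = coord x j o := by
  cases o with
  | none => simp [coord, Function.update_of_ne h]
  | some a => simp [coord, Function.update_of_ne h]

/-- Key affinity identity: the multilinear extension is affine in each player's block. -/
lemma mlext_update (f : PureProf A → ℝ) (x : Strat A) (i : ι) (z : A i → ℝ) :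
    mlext f (Function.update x i z) = mlext f x + Lpart f x i (z - x i) := by
  unfold mlext Lpart
  rw [← Finset.sum_add_distrib]
  refine Finset.sum_congr rfl fun y _ => ?_
  have h1 : ∏ j, coord (Function.update x i z) j (y j)
      = coord (Function.update x i z) i (y i)
        * ∏ j ∈ Finset.univ.erase i, coord (Function.update x i z) j (y j) :=
    (Finset.mul_prod_erase _ _ (Finset.mem_univ i)).symm
  have h2 : ∏ j ∈ Finset.univ.erase i, coord (Function.update x i z) j (y j)
      = ∏ j ∈ Finset.univ.erase i, coord x j (y j) :=
    Finset.prod_congr rfl fun j hj =>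
      coord_update_ne x i j (Finset.ne_of_mem_erase hj) z (y j)
  have h3 : ∏ j, coord x j (y j)
      = coord x i (y i) * ∏ j ∈ Finset.univ.erase i, coord x j (y j) :=
    (Finset.mul_prod_erase _ _ (Finset.mem_univ i)).symm
  rw [h1, h2, coord_update_same, h3]
  ring

/-- Summation against `lco` kills functions not depending on player `i`'s coordinate. -/
lemma sum_lco_invariant (i : ι) (w : A i → ℝ) (φ : PureProf A → ℝ)
    (hφ : ∀ (y : PureProf A) (o : Option (A i)), φ (Function.update y i o) = φ y) :
    ∑ y : PureProf A, φ y * lco i w (y i) = 0 := by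
  classical
  set e := Equiv.piSplitAt i (fun j => Option (A j)) with he
  have hsum := Equiv.sum_comp e.symm (fun y : PureProf A => φ y * lco i w (y i))
  rw [← hsum, Fintype.sum_prod_type, Finset.sum_comm]
  refine Finset.sum_eq_zero fun r _ => ?_
  have hval : ∀ o : Option (A i), (e.symm (o, r)) i = o := by
    intro o
    simp [he, Equiv.piSplitAt]
  have hsymm : ∀ o : Option (A i),
      e.symm (o, r) = Function.update (e.symm (none, r)) i o := by
    intro o
    funext j
    by_cases h : j = i
    · subst h
      simp [he, Equiv.piSplitAt]
    · simp [he, Equiv.piSplitAt, h, Function.update_of_ne h]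
  have : ∀ o : Option (A i),
      φ (e.symm (o, r)) * lco i w ((e.symm (o, r)) i)
        = φ (e.symm (none, r)) * lco i w o := by
    intro o
    rw [hval o, hsymm o, hφ]
  rw [Finset.sum_congr rfl fun o _ => this o, ← Finset.mul_sum, lco_sum, mul_zero]

/-- Transfer of the per-block linear form from the utilities to the potential. -/
lemma Lpart_potential {util : ι → PureProf A → ℝ} {w : ι → ℝ} {u : PureProf A → ℝ}
    (hpot : IsWeightedPotential util w u) (i : ι) (x : Strat A) (v : A i → ℝ) :
    Lpart (util i) x i v = w i * Lpart u x i v := by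
  have hz : ∑ y : PureProf A,
      ((util i y - w i * u y) * ∏ j ∈ Finset.univ.erase i, coord x j (y j))
        * lco i v (y i) = 0 := by
    refine sum_lco_invariant i v _ fun y o => ?_
    have h1 := hpot.2 i y o
    have h2 : ∀ j ∈ Finset.univ.erase i,
        coord x j (Function.update y i o j) = coord x j (y j) := by
      intro j hj
      rw [Function.update_of_ne (Finset.ne_of_mem_erase hj)]
    rw [Finset.prod_congr rfl h2]
    have : util i (Function.update y i o) - w i * u (Function.update y i o)
        = util i y - w i * u y := by linarith
    rw [this]
  have hexp : Lpart (util i) x i v - w i * Lpart u x i v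
      = ∑ y : PureProf A,
        ((util i y - w i * u y) * ∏ j ∈ Finset.univ.erase i, coord x j (y j))
          * lco i v (y i) := by
    unfold Lpart
    rw [Finset.mul_sum, ← Finset.sum_sub_distrib]
    refine Finset.sum_congr rfl fun y _ => ?_
    ring
  linarith [hexp.symm ▸ hz]

lemma contDiff_mlext (f : PureProf A → ℝ) : ContDiff ℝ 2 (mlext f (A := A)) := by
  unfold mlext
  refine ContDiff.sum fun y _ => ContDiff.mul contDiff_const ?_
  refine contDiff_prod fun i _ => ?_
  cases hy : y i with
  | none =>
    have : (fun x : Strat A => coord x i none) = fun x => 1 - ∑ a, x i a := rfl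
    rw [this]
    refine ContDiff.sub contDiff_const (ContDiff.sum fun a _ => ?_)
    exact ((ContinuousLinearMap.proj (R := ℝ) (φ := fun b : A i => ℝ) a).contDiff).comp
      ((ContinuousLinearMap.proj (R := ℝ) (φ := fun j : ι => A j → ℝ) i)).contDiff
  | some a =>
    have : (fun x : Strat A => coord x i (some a)) = fun x => x i a := rfl
    rw [this]
    exact ((ContinuousLinearMap.proj (R := ℝ) (φ := fun b : A i => ℝ) a).contDiff).comp
      ((ContinuousLinearMap.proj (R := ℝ) (φ := fun j : ι => A j → ℝ) i)).contDiff

lemma differentiable_mlext (f : PureProf A → ℝ) : Differentiable ℝ (mlext f (A := A)) :=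
  (contDiff_mlext f).differentiable (by norm_num)

lemma fderiv_mlext_single (f : PureProf A → ℝ) (x : Strat A) (i : ι) (w : A i → ℝ) :
    fderiv ℝ (mlext f) x ((Pi.single i w : Strat A)) = Lpart f x i w := by
  classical
  have hline : ∀ t : ℝ, mlext f (x + t • (Pi.single i w : Strat A))
      = mlext f x + t * Lpart f x i w := by
    intro t
    have hupd : x + t • (Pi.single i w : Strat A) = Function.update x i (x i + t • w) := by
      funext j
      by_cases h : j = i
      · subst h; simp
      · simp [Function.update_of_ne h, Pi.single_eq_of_ne h]
    rw [hupd, mlext_update]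
    congr 1
    have h2 : x i + t • w - x i = t • w := by abel
    rw [h2, Lpart_smul]
  have h1 : HasDerivAt (fun t : ℝ => mlext f (x + t • (Pi.single i w : Strat A)))
      (fderiv ℝ (mlext f) x ((Pi.single i w : Strat A))) 0 := by
    have hx : HasFDerivAt (mlext f) (fderiv ℝ (mlext f) x) x :=
      (differentiable_mlext f x).hasFDerivAt
    have hl : HasDerivAt (fun t : ℝ => x + t • (Pi.single i w : Strat A)) ((Pi.single i w : Strat A)) 0 := by
      simpa using ((hasDerivAt_id (0:ℝ)).smul_const ((Pi.single i w : Strat A))).const_add x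
    have hx' : HasFDerivAt (mlext f) (fderiv ℝ (mlext f) x)
        (x + (0:ℝ) • (Pi.single i w : Strat A)) := by simpa using hx
    exact hx'.comp_hasDerivAt 0 hl
  have h2 : HasDerivAt (fun t : ℝ => mlext f x + t * Lpart f x i w) (Lpart f x i w) 0 :=
    (hasDerivAt_mul_const (Lpart f x i w)).const_add (mlext f x)
  have heq : (fun t : ℝ => mlext f (x + t • (Pi.single i w : Strat A)))
      = fun t : ℝ => mlext f x + t * Lpart f x i w := funext hline
  rw [heq] at h1
  exact h1.unique h2

lemma fderiv_mlext_apply (f : PureProf A → ℝ) (x : Strat A) (h : Strat A) :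
    fderiv ℝ (mlext f) x h = ∑ i, Lpart f x i (h i) := by
  classical
  conv_lhs => rw [← Finset.univ_sum_single h]
  rw [map_sum]
  exact Finset.sum_congr rfl fun i _ => fderiv_mlext_single f x i (h i)

lemma norm_sub_le_one_of_mixed {p q : Strat A} (hp : p ∈ mixedX) (hq : q ∈ mixedX) :
    ‖p - q‖ ≤ 1 := by
  have hcoord : ∀ {r : Strat A}, r ∈ mixedX → ∀ (i : ι) (a : A i),
      0 ≤ r i a ∧ r i a ≤ 1 := by
    intro r hr i a
    obtain ⟨h0, h1⟩ := hr i
    exact ⟨h0 a, le_trans (Finset.single_le_sum (fun b _ => h0 b) (Finset.mem_univ a)) h1⟩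
  refine (pi_norm_le_iff_of_nonneg zero_le_one).mpr fun i => ?_
  refine (pi_norm_le_iff_of_nonneg zero_le_one).mpr fun a => ?_
  have h1 := hcoord hp i a
  have h2 := hcoord hq i a
  rw [Pi.sub_apply, Pi.sub_apply, Real.norm_eq_abs, abs_le]
  constructor <;> linarith

lemma Lpart_le_of_BR {util : ι → PureProf A → ℝ} {w : ι → ℝ} {u : PureProf A → ℝ}
    (hpot : IsWeightedPotential util w u) {x : Strat A} {i : ι}
    {ξi : A i → ℝ} (hξ : ξi ∈ BRi (util i) x i) {z : A i → ℝ} (hz : z ∈ Xi A i) :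
    Lpart u x i (z - x i) ≤ Lpart u x i (ξi - x i) := by
  have h := hξ.2 z hz
  rw [mlext_update, mlext_update, Lpart_potential hpot, Lpart_potential hpot] at h
  have hw := hpot.1 i
  have h' : w i * Lpart u x i (z - x i) ≤ w i * Lpart u x i (ξi - x i) := by linarith
  exact (mul_le_mul_iff_right₀ hw).mp h'

lemma fderiv_mlext_eq_zero_of_NE {util : ι → PureProf A → ℝ} {w : ι → ℝ}
    {u : PureProf A → ℝ} (hpot : IsWeightedPotential util w u) {xs : Strat A}
    (hNE : IsNE util xs) {ε : ℝ} (hε : 0 < ε)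
    (hball : Metric.ball xs ε ⊆ mixedX) :
    fderiv ℝ (mlext u) xs = 0 := by
  classical
  have hsmall : ∀ (i : ι) (v' : A i → ℝ), ‖v'‖ < ε → Lpart u xs i v' ≤ 0 := by
    intro i v' hv'
    have hmem : xs + (Pi.single i v' : Strat A) ∈ mixedX := by
      apply hball
      rw [Metric.mem_ball, dist_eq_norm]
      have h0 : xs + (Pi.single i v' : Strat A) - xs = (Pi.single i v' : Strat A) := by abel
      rw [h0]
      calc ‖(Pi.single i v' : Strat A)‖ ≤ ‖v'‖ := by
            refine (pi_norm_le_iff_of_nonneg (norm_nonneg v')).mpr fun j => ?_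
            by_cases h : j = i
            · subst h; simp
            · simp [Pi.single_eq_of_ne h]
        _ < ε := hv'
    have hz : xs i + v' ∈ Xi A i := by
      have := hmem i
      simpa using this
    have h := Lpart_le_of_BR hpot (hNE i) hz
    simpa [Lpart_zero] using h
  have key : ∀ (i : ι) (v : A i → ℝ), Lpart u xs i v = 0 := by
    intro i v
    rcases eq_or_ne v 0 with rfl | hv
    · exact Lpart_zero u xs i
    · have hnorm : 0 < ‖v‖ := norm_pos_iff.mpr hv
      set t := ε / (2 * ‖v‖) with ht
      have htpos : 0 < t := by positivity
      have h1 : ‖t • v‖ < ε := by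
        rw [norm_smul, Real.norm_eq_abs, abs_of_pos htpos, ht]
        rw [div_mul_eq_mul_div, div_lt_iff₀ (by positivity)]
        nlinarith
      have h2 : ‖t • (-v)‖ < ε := by
        rwa [smul_neg, norm_neg]
      have e1 := hsmall i (t • v) h1
      have e2 := hsmall i (t • (-v)) h2
      rw [Lpart_smul] at e1 e2
      have hneg : Lpart u xs i (-v) = -Lpart u xs i v := by
        have := Lpart_smul u xs i (-1) v
        simpa using this
      rw [hneg] at e2
      nlinarith
  refine ContinuousLinearMap.ext fun h => ?_
  rw [fderiv_mlext_apply]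
  simpa using Finset.sum_eq_zero fun i _ => key i (h i)

lemma hess_lower {u : PureProf A → ℝ} {xs : Strat A}
    (hhess : ∀ v : Strat A, v ≠ 0 →
      ∃ w : Strat A, fderiv ℝ (fderiv ℝ (mlext u)) xs v w ≠ 0) :
    ∃ lam : ℝ, 0 < lam ∧ ∀ v : Strat A,
      lam * ‖v‖ ≤ ‖fderiv ℝ (fderiv ℝ (mlext u)) xs v‖ := by
  set H := fderiv ℝ (fderiv ℝ (mlext u)) xs with hH
  have hinj : Function.Injective H := by
    intro v1 v2 hv
    by_contra hne
    obtain ⟨w', hw'⟩ := hhess (v1 - v2) (sub_ne_zero.mpr hne)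
    apply hw'
    have h0 : H (v1 - v2) = H v1 - H v2 := map_sub H v1 v2
    rw [h0, hv, sub_self]
    rfl
  obtain ⟨K, hK, hanti⟩ := H.toLinearMap.injective_iff_antilipschitz.mp hinj
  refine ⟨(K:ℝ)⁻¹, by positivity, fun v => ?_⟩
  have h1 : dist v 0 ≤ K * dist (H v) (H 0) := hanti.le_mul_dist v 0
  rw [dist_zero_right, map_zero, dist_zero_right] at h1
  have hKpos : (0:ℝ) < K := hK
  rw [inv_mul_le_iff₀ hKpos]
  exact h1

/-- Near-equilibrium best responses produce potential at rate `δ‖∇U(x)‖`. -/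
lemma key_part1 {util : ι → PureProf A → ℝ} {w : ι → ℝ} {u : PureProf A → ℝ}
    (hpot : IsWeightedPotential util w u) {xs : Strat A} {δ : ℝ} (hδ : 0 < δ)
    (hball : Metric.ball xs (2 * δ) ⊆ mixedX)
    {x : Strat A} (hx : x ∈ Metric.ball xs δ) (hxX : x ∈ mixedX)
    {ξ : Strat A} (hξ : ξ ∈ BRset util x) :
    δ * ‖fderiv ℝ (mlext u) x‖ ≤ fderiv ℝ (mlext u) x (ξ - x) := by
  classical
  set L := fderiv ℝ (mlext u) x with hL
  set M := L (ξ - x) with hM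
  -- step (a): any admissible direction is dominated by the best response
  have hstep : ∀ h : Strat A, (∀ i, x i + h i ∈ Xi A i) → L h ≤ M := by
    intro h hh
    rw [hM, hL, fderiv_mlext_apply, fderiv_mlext_apply]
    refine Finset.sum_le_sum fun i _ => ?_
    have := Lpart_le_of_BR hpot (hξ i) (hh i)
    simpa using this
  -- step (b): small vectors are admissible, in both directions
  have hsmall : ∀ h : Strat A, ‖h‖ ≤ δ → |L h| ≤ M := by
    intro h hnh
    have hmem : ∀ h' : Strat A, ‖h'‖ ≤ δ → ∀ i, x i + h' i ∈ Xi A i := by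
      intro h' hnh' i
      have : x + h' ∈ mixedX := by
        apply hball
        rw [Metric.mem_ball, dist_eq_norm]
        have h0 : x + h' - xs = (x - xs) + h' := by abel
        rw [h0]
        calc ‖x - xs + h'‖ ≤ ‖x - xs‖ + ‖h'‖ := norm_add_le _ _
          _ < δ + δ := by
              have := Metric.mem_ball.mp hx
              rw [dist_eq_norm] at this
              exact add_lt_add_of_lt_of_le this (by linarith)
          _ = 2 * δ := by ring
      simpa using this i
    have h1 : L h ≤ M := hstep h (hmem h hnh)
    have h2 : L (-h) ≤ M := hstep (-h) (hmem (-h) (by rwa [norm_neg]))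
    rw [map_neg] at h2
    rw [abs_le]
    constructor <;> linarith
  have hM0 : 0 ≤ M := by
    have := hstep 0 (fun i => by simpa using hxX i)
    simpa using this
  -- step (c): operator norm bound
  have hop : ‖L‖ ≤ M / δ := by
    refine ContinuousLinearMap.opNorm_le_bound L (by positivity) fun h => ?_
    rcases eq_or_ne h 0 with rfl | hh0
    · simp
    · have hnh : 0 < ‖h‖ := norm_pos_iff.mpr hh0
      set h' : Strat A := (δ / ‖h‖) • h with hh'
      have hn' : ‖h'‖ ≤ δ := by
        rw [hh', norm_smul, Real.norm_eq_abs, abs_of_pos (by positivity)]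
        rw [div_mul_cancel₀ _ (ne_of_gt hnh)]
      have habs := hsmall h' hn'
      have hLh' : L h' = (δ / ‖h‖) * L h := by rw [hh', L.map_smul]; rfl
      rw [hLh', abs_mul, abs_of_pos (by positivity : (0:ℝ) < δ / ‖h‖)] at habs
      rw [Real.norm_eq_abs]
      have heq : |L h| = ‖h‖ / δ * (δ / ‖h‖ * |L h|) := by field_simp
      rw [heq]
      calc ‖h‖ / δ * (δ / ‖h‖ * |L h|) ≤ ‖h‖ / δ * M :=
            mul_le_mul_of_nonneg_left habs (by positivity)
        _ = M / δ * ‖h‖ := by ring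
  calc δ * ‖L‖ ≤ δ * (M / δ) := by nlinarith [hop]
    _ = M := by field_simp

/-- **Lemma 4.3 / inequality (4.5).** Near a completely mixed equilibrium with
non-singular Hessian, the potential production of the best-response field is at least
proportional to the distance to the equilibrium; consequently `d/dt U(x(t)) ≥
c‖x(t) − x*‖` a.e. along any best-response process remaining in the neighborhood. -/
theorem potential_production_completely_mixed
    [Nonempty ι] (util : ι → PureProf A → ℝ) (u : PureProf A → ℝ)
    (hpot : ∃ w : ι → ℝ, IsWeightedPotential util w u)
    (xs : Strat A) (hNE : IsNE util xs)
    (hmixed : xs ∈ interior (mixedX (A := A)))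
    (hhess : ∀ v : Strat A, v ≠ 0 →
      ∃ w : Strat A, fderiv ℝ (fderiv ℝ (mlext u)) xs v w ≠ 0) :
    ∃ c : ℝ, 0 < c ∧ ∃ V ∈ 𝓝 xs,
      (∀ x ∈ V ∩ mixedX, ∀ ξ ∈ BRset util x,
        c * ‖x - xs‖ ≤ fderiv ℝ (mlext u) x (ξ - x)) ∧
      (∀ x : ℝ → Strat A, IsBRProcess util x → (∀ t : ℝ, 0 ≤ t → x t ∈ V) →
        ∀ᵐ t ∂(volume.restrict (Ici (0:ℝ))),
          ∀ d : ℝ, HasDerivAt (fun s => mlext u (x s)) d t →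
            c * ‖x t - xs‖ ≤ d) := by
  classical
  obtain ⟨wt, hpotw⟩ := hpot
  obtain ⟨ε₀, hε₀, hball⟩ := Metric.mem_nhds_iff.mp (mem_interior_iff_mem_nhds.mp hmixed)
  set δ : ℝ := ε₀ / 3 with hδdef
  have hδ : 0 < δ := by positivity
  have hball2 : Metric.ball xs (2 * δ) ⊆ mixedX := fun y hy =>
    hball (Metric.ball_subset_ball (by rw [hδdef]; linarith) hy)
  have hgrad0 : fderiv ℝ (mlext u) xs = 0 :=
    fderiv_mlext_eq_zero_of_NE hpotw hNE hε₀ hball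
  obtain ⟨lam, hlam, hlow⟩ := hess_lower (u := u) (xs := xs) hhess
  have hW : ∀ᶠ y in 𝓝 xs, lam / 2 * ‖y - xs‖ ≤ ‖fderiv ℝ (mlext u) y‖ := by
    have hder : HasFDerivAt (fderiv ℝ (mlext u))
        (fderiv ℝ (fderiv ℝ (mlext u)) xs) xs := by
      have hd : Differentiable ℝ (fderiv ℝ (mlext u)) :=
        ((contDiff_mlext u).fderiv_right (m := 1) (by norm_num)).differentiable (by norm_num)
      exact (hd xs).hasFDerivAt
    have hlo := hder.isLittleO.def (show 0 < lam / 2 by positivity)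
    filter_upwards [hlo] with y hy
    have h1 := hlow (y - xs)
    rw [hgrad0] at hy
    simp only [ContinuousLinearMap.zero_apply, sub_zero] at hy
    have h2 : ‖fderiv ℝ (fderiv ℝ (mlext u)) xs (y - xs)‖
        ≤ ‖fderiv ℝ (mlext u) y‖
          + ‖fderiv ℝ (mlext u) y - fderiv ℝ (fderiv ℝ (mlext u)) xs (y - xs)‖ := by
      calc ‖fderiv ℝ (fderiv ℝ (mlext u)) xs (y - xs)‖
          = ‖fderiv ℝ (mlext u) y
              - (fderiv ℝ (mlext u) y - fderiv ℝ (fderiv ℝ (mlext u)) xs (y - xs))‖ := by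
            congr 1; abel
        _ ≤ _ := norm_sub_le _ _
    linarith
  set c : ℝ := δ * (lam / 2) with hcdef
  have hc : 0 < c := by positivity
  set V : Set (Strat A) :=
    Metric.ball xs δ ∩ {y | lam / 2 * ‖y - xs‖ ≤ ‖fderiv ℝ (mlext u) y‖} with hVdef
  have hVnhds : V ∈ 𝓝 xs := Filter.inter_mem (Metric.ball_mem_nhds xs hδ) hW
  have hkey : ∀ x ∈ V ∩ mixedX, ∀ ξ ∈ BRset util x,
      c * ‖x - xs‖ ≤ fderiv ℝ (mlext u) x (ξ - x) := by
    rintro x ⟨⟨hx1, hx2⟩, hxX⟩ ξ hξ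
    have h1 := key_part1 hpotw hδ hball2 hx1 hxX hξ
    have h2 : lam / 2 * ‖x - xs‖ ≤ ‖fderiv ℝ (mlext u) x‖ := hx2
    calc c * ‖x - xs‖ = δ * (lam / 2 * ‖x - xs‖) := by rw [hcdef]; ring
      _ ≤ δ * ‖fderiv ℝ (mlext u) x‖ := mul_le_mul_of_nonneg_left h2 hδ.le
      _ ≤ _ := h1
  refine ⟨c, hc, V, hVnhds, hkey, ?_⟩
  rintro x ⟨hmemX, v, hvloc, hxint, hae⟩ hxV
  have hvseg : ∀ a b : ℝ, 0 ≤ a → IntegrableOn v (Ioc a b) volume := by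
    intro a b ha
    rcases le_or_gt a b with hab | hab
    · exact (hvloc.integrableOn_compact_subset
        (fun r hr => le_trans ha hr.1) isCompact_Icc).mono_set Ioc_subset_Icc_self
    · rw [Set.Ioc_eq_empty (not_lt.mpr hab.le)]
      exact integrableOn_empty
  have hseg : ∀ t s : ℝ, 0 ≤ t → t ≤ s → x s - x t = ∫ r in Ioc t s, v r := by
    intro t s ht hts
    rw [hxint s (ht.trans hts), hxint t ht]
    have hsplit : Ioc (0:ℝ) s = Ioc 0 t ∪ Ioc t s := (Ioc_union_Ioc_eq_Ioc ht hts).symm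
    rw [hsplit, setIntegral_union (Ioc_disjoint_Ioc_of_le le_rfl) measurableSet_Ioc
      (hvseg 0 t le_rfl) (hvseg t s ht)]
    abel
  have hgood : ∀ᵐ r ∂(volume.restrict (Ici (0:ℝ))),
      x r + v r ∈ BRset util (x r) ∧ ‖v r‖ ≤ 1 := by
    filter_upwards [hae, self_mem_ae_restrict measurableSet_Ici] with r hr hr0
    refine ⟨hr, ?_⟩
    have hx1 : x r ∈ mixedX := hmemX r hr0
    have hx2 : x r + v r ∈ mixedX := fun i => (hr i).1
    have := norm_sub_le_one_of_mixed hx2 hx1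
    have he : x r + v r - x r = v r := by abel
    rwa [he] at this
  have hlip : ∀ t s : ℝ, 0 ≤ t → t ≤ s → ‖x s - x t‖ ≤ s - t := by
    intro t s ht hts
    rw [hseg t s ht hts]
    have hb : ∀ᵐ r ∂(volume.restrict (Ioc t s)), ‖v r‖ ≤ 1 := by
      have hsub : Ioc t s ⊆ Ici (0:ℝ) := fun r hr => le_trans ht hr.1.le
      exact (hgood.filter_mono (ae_mono (Measure.restrict_mono hsub le_rfl))).mono
        fun r hr => hr.2
    calc ‖∫ r in Ioc t s, v r‖ ≤ ∫ r in Ioc t s, ‖v r‖ := norm_integral_le_integral_norm _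
      _ ≤ ∫ _r in Ioc t s, (1:ℝ) :=
          setIntegral_mono_ae_restrict (hvseg t s ht).norm
            (integrableOn_const measure_Ioc_lt_top.ne) hb
      _ = s - t := by
          simp [Real.volume_Ioc, ENNReal.toReal_ofReal (by linarith : (0:ℝ) ≤ s - t), hts]
  refine Filter.eventually_of_mem (self_mem_ae_restrict measurableSet_Ici) fun t ht => ?_
  intro d hd
  have ht : (0:ℝ) ≤ t := ht
  refine le_of_forall_pos_le_add fun ε hε => ?_
  obtain ⟨ρ₁, hρ₁, hTaylor⟩ : ∃ ρ > 0, ∀ y : Strat A, dist y (x t) < ρ →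
      ‖mlext u y - mlext u (x t) - fderiv ℝ (mlext u) (x t) (y - x t)‖
        ≤ ε/3 * ‖y - x t‖ := by
    have h := ((differentiable_mlext u (x t)).hasFDerivAt).isLittleO.def
      (show 0 < ε/3 by positivity)
    rw [Metric.eventually_nhds_iff] at h
    obtain ⟨ρ, hρ, h⟩ := h
    exact ⟨ρ, hρ, fun y hy => by simpa [Real.norm_eq_abs] using h hy⟩
  obtain ⟨ρ₂, hρ₂, hcont⟩ : ∃ ρ > 0, ∀ y : Strat A, dist y (x t) < ρ →
      ‖fderiv ℝ (mlext u) (x t) - fderiv ℝ (mlext u) y‖ < ε/3 := by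
    have hcDU : Continuous (fun y : Strat A => fderiv ℝ (mlext u) y) :=
      ((contDiff_mlext u).fderiv_right (m := 1) (by norm_num)).continuous
    obtain ⟨ρ, hρ, h⟩ := Metric.continuousAt_iff.mp hcDU.continuousAt (ε/3) (by positivity)
    refine ⟨ρ, hρ, fun y hy => ?_⟩
    have := h hy
    rwa [dist_eq_norm, norm_sub_rev] at this
  have hmin : 0 < min (min ρ₁ ρ₂) (ε / (3 * c)) :=
    lt_min (lt_min hρ₁ hρ₂) (by positivity)
  set ρ : ℝ := min (min ρ₁ ρ₂) (ε / (3 * c)) / 2 with hρdef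
  have hρ : 0 < ρ := by positivity
  have hρhalf : ρ < min (min ρ₁ ρ₂) (ε / (3 * c)) := by
    rw [hρdef]; exact half_lt_self hmin
  have hρρ₁ : ρ < ρ₁ :=
    lt_of_lt_of_le hρhalf (le_trans (min_le_left _ _) (min_le_left _ _))
  have hρρ₂ : ρ < ρ₂ :=
    lt_of_lt_of_le hρhalf (le_trans (min_le_left _ _) (min_le_right _ _))
  have hρc : c * ρ ≤ ε/3 := by
    have h1 : ρ ≤ ε / (3 * c) := le_of_lt (lt_of_lt_of_le hρhalf (min_le_right _ _))
    calc c * ρ ≤ c * (ε / (3 * c)) := mul_le_mul_of_nonneg_left h1 hc.le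
      _ = ε/3 := by field_simp
  have hslope : Tendsto (slope (fun s => mlext u (x s)) t) (𝓝[>] t) (𝓝 d) := by
    have h1 : HasDerivWithinAt (fun s => mlext u (x s)) d (Ioi t) t := hd.hasDerivWithinAt
    have h2 := hasDerivWithinAt_iff_tendsto_slope.mp h1
    rwa [Set.diff_singleton_eq_self (by simp)] at h2
  have hbnd : ∀ᶠ s in 𝓝[>] t, c * ‖x t - xs‖ - ε ≤ slope (fun s => mlext u (x s)) t s := by
    have hmem : Ioc t (t + ρ) ∈ 𝓝[>] t :=
      Ioc_mem_nhdsGT_of_mem ⟨le_refl t, by linarith⟩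
    filter_upwards [hmem] with s hs
    have hts : t < s := hs.1
    have hstρ : s - t ≤ ρ := by linarith [hs.2]
    have hxst : ‖x s - x t‖ ≤ s - t := hlip t s ht hts.le
    have hdist : dist (x s) (x t) < ρ₁ := by
      rw [dist_eq_norm]; exact lt_of_le_of_lt (hxst.trans hstρ) hρρ₁
    have hT := hTaylor (x s) hdist
    have hT' : fderiv ℝ (mlext u) (x t) (x s - x t) - ε/3 * ‖x s - x t‖
        ≤ mlext u (x s) - mlext u (x t) := by
      have := (abs_le.mp hT).1
      linarith
    have hIeq : fderiv ℝ (mlext u) (x t) (x s - x t)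
        = ∫ r in Ioc t s, fderiv ℝ (mlext u) (x t) (v r) := by
      rw [hseg t s ht hts.le]
      exact (ContinuousLinearMap.integral_comp_comm _ (hvseg t s ht)).symm
    have hptwise : ∀ᵐ r ∂(volume.restrict (Ioc t s)),
        c * ‖x t - xs‖ - 2 * (ε/3) ≤ fderiv ℝ (mlext u) (x t) (v r) := by
      have hsub : Ioc t s ⊆ Ici (0:ℝ) := fun r hr => le_trans ht hr.1.le
      filter_upwards [hgood.filter_mono (ae_mono (Measure.restrict_mono hsub le_rfl)),
        self_mem_ae_restrict measurableSet_Ioc] with r hr hrIoc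
      obtain ⟨hBRr, hvr⟩ := hr
      have hr0 : 0 ≤ r := le_trans ht hrIoc.1.le
      have hrt : ‖x r - x t‖ ≤ r - t := hlip t r ht hrIoc.1.le
      have hrtρ : ‖x r - x t‖ ≤ ρ := hrt.trans (by linarith [hrIoc.2])
      have h2 : c * ‖x r - xs‖ ≤ fderiv ℝ (mlext u) (x r) ((x r + v r) - x r) :=
        hkey (x r) ⟨hxV r hr0, hmemX r hr0⟩ (x r + v r) hBRr
      have h2' : c * ‖x r - xs‖ ≤ fderiv ℝ (mlext u) (x r) (v r) := by
        have he : x r + v r - x r = v r := by abel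
        rwa [he] at h2
      have h5 : ‖fderiv ℝ (mlext u) (x t) - fderiv ℝ (mlext u) (x r)‖ < ε/3 := by
        apply hcont
        rw [dist_eq_norm]
        exact lt_of_le_of_lt hrtρ hρρ₂
      have h4 : |(fderiv ℝ (mlext u) (x t) - fderiv ℝ (mlext u) (x r)) (v r)|
          ≤ ‖fderiv ℝ (mlext u) (x t) - fderiv ℝ (mlext u) (x r)‖ * ‖v r‖ := by
        rw [← Real.norm_eq_abs]
        exact ContinuousLinearMap.le_opNorm _ _
      have h9 : -(ε/3) ≤ (fderiv ℝ (mlext u) (x t) - fderiv ℝ (mlext u) (x r)) (v r) := by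
        have hmul : ‖fderiv ℝ (mlext u) (x t) - fderiv ℝ (mlext u) (x r)‖ * ‖v r‖ ≤ ε/3 := by
          calc ‖fderiv ℝ (mlext u) (x t) - fderiv ℝ (mlext u) (x r)‖ * ‖v r‖
              ≤ ‖fderiv ℝ (mlext u) (x t) - fderiv ℝ (mlext u) (x r)‖ * 1 :=
                mul_le_mul_of_nonneg_left hvr (norm_nonneg _)
            _ ≤ ε/3 := by rw [mul_one]; exact h5.le
        have := neg_abs_le ((fderiv ℝ (mlext u) (x t) - fderiv ℝ (mlext u) (x r)) (v r))
        linarith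
      have h3 : fderiv ℝ (mlext u) (x t) (v r) = fderiv ℝ (mlext u) (x r) (v r)
          + (fderiv ℝ (mlext u) (x t) - fderiv ℝ (mlext u) (x r)) (v r) := by
        rw [ContinuousLinearMap.sub_apply]; ring
      have h7 : ‖x t - xs‖ ≤ ‖x r - xs‖ + ‖x r - x t‖ := by
        calc ‖x t - xs‖ = ‖(x r - xs) - (x r - x t)‖ := by congr 1; abel
          _ ≤ ‖x r - xs‖ + ‖x r - x t‖ := norm_sub_le _ _
      have h8 : c * ‖x r - x t‖ ≤ ε/3 :=
        le_trans (mul_le_mul_of_nonneg_left hrtρ hc.le) hρc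
      have h7' : c * ‖x t - xs‖ ≤ c * ‖x r - xs‖ + c * ‖x r - x t‖ := by
        have := mul_le_mul_of_nonneg_left h7 hc.le
        linarith [this, mul_add c ‖x r - xs‖ ‖x r - x t‖]
      linarith
    have hIlow : (c * ‖x t - xs‖ - 2 * (ε/3)) * (s - t)
        ≤ ∫ r in Ioc t s, fderiv ℝ (mlext u) (x t) (v r) := by
      have hgint : IntegrableOn (fun r => fderiv ℝ (mlext u) (x t) (v r)) (Ioc t s) volume :=
        ContinuousLinearMap.integrable_comp _ (hvseg t s ht)
      have hconst : ∫ _r in Ioc t s, (c * ‖x t - xs‖ - 2 * (ε/3))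
          = (c * ‖x t - xs‖ - 2 * (ε/3)) * (s - t) := by
        simp [Real.volume_Ioc, ENNReal.toReal_ofReal (by linarith : (0:ℝ) ≤ s - t),
          smul_eq_mul, mul_comm, hts.le]
      rw [← hconst]
      exact setIntegral_mono_ae_restrict
        (integrableOn_const measure_Ioc_lt_top.ne) hgint hptwise
    rw [slope_def_field, le_div_iff₀ (by linarith : (0:ℝ) < s - t)]
    have hε3 : ε/3 * ‖x s - x t‖ ≤ ε/3 * (s - t) :=
      mul_le_mul_of_nonneg_left hxst (by positivity)
    have hexpand : (c * ‖x t - xs‖ - ε) * (s - t)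
        = (c * ‖x t - xs‖ - 2 * (ε/3)) * (s - t) - (ε/3) * (s - t) := by ring
    rw [hexpand]
    rw [hIeq] at hT'
    linarith
  have hfin : c * ‖x t - xs‖ - ε ≤ d := ge_of_tendsto hslope hbnd
  linarith

end BRGame
end

section
/- Let c > 0 and let e : [0,∞) → [0,∞) be continuous with e(t) → 0 as t → ∞, and suppose that ∫_t^∞ e(s) ds ≤ c·e(t)² for every t ≥ 0. Then the Lebesgue measure of the set {t ≥ 0 : e(t) > 0} is at most 4c·sup_{t ≥ 0} e(t). -/
open MeasureTheory Set Filter Topology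
open scoped ENNReal

/-- The finite-time-convergence estimate from the proof of Proposition 5.8: if `e ≥ 0`
is continuous on `[0,∞)`, tends to `0` at infinity, and satisfies
`∫_t^∞ e(s) ds ≤ c·e(t)²` for all `t ≥ 0`, then the set `{t ≥ 0 : e(t) > 0}` has
Lebesgue measure at most `4c·sup_{t ≥ 0} e(t)`. -/
theorem finite_time_estimate (c : ℝ) (hc : 0 < c) (e : ℝ → ℝ)
    (he_cont : ContinuousOn e (Ici 0))
    (he_nonneg : ∀ t : ℝ, 0 ≤ t → 0 ≤ e t)
    (he_lim : Tendsto e atTop (𝓝 0))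
    (hint : ∀ t : ℝ, 0 ≤ t →
      ∫⁻ s in Ioi t, ENNReal.ofReal (e s) ≤ ENNReal.ofReal (c * e t ^ 2)) :
    volume {t : ℝ | 0 ≤ t ∧ 0 < e t}
      ≤ ENNReal.ofReal (4 * c * ⨆ t : {t : ℝ // 0 ≤ t}, e t) := by
  classical
  set M : ℝ := ⨆ t : {t : ℝ // 0 ≤ t}, e t with hM_def
  have hbdd : BddAbove (range fun t : {t : ℝ // 0 ≤ t} => e t) := by
    have h1 : ∀ᶠ x in atTop, e x < 1 := he_lim.eventually_lt_const one_pos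
    obtain ⟨T, hT⟩ := h1.exists_forall_of_atTop
    obtain ⟨C, hC⟩ := (isCompact_Icc (a := (0:ℝ)) (b := max T 0)).exists_bound_of_continuousOn
      (he_cont.mono (Icc_subset_Ici_self))
    refine ⟨max C 1, ?_⟩
    rintro x ⟨⟨s, hs⟩, rfl⟩
    rcases le_total s (max T 0) with h | h
    · exact le_trans (le_trans (le_abs_self _) (hC s ⟨hs, h⟩)) (le_max_left _ _)
    · exact le_trans (hT s (le_trans (le_max_left _ _) h)).le (le_max_right _ _)
  have hMt : ∀ t : ℝ, 0 ≤ t → e t ≤ M := fun t ht => le_ciSup hbdd ⟨t, ht⟩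
  have hM0 : 0 ≤ M := le_trans (he_nonneg 0 le_rfl) (hMt 0 le_rfl)
  set E : ℝ → ℝ≥0∞ := fun t => ∫⁻ s in Ioi t, ENNReal.ofReal (e s) with hE_def
  have hEne : ∀ t : ℝ, 0 ≤ t → E t ≠ ⊤ := fun t ht =>
    ((hint t ht).trans_lt ENNReal.ofReal_lt_top).ne
  have hEmono : ∀ a b : ℝ, a ≤ b → E b ≤ E a := fun a b hab =>
    lintegral_mono_set (Ioi_subset_Ioi hab)
  have hsplit : ∀ a b : ℝ, a ≤ b →
      E a = (∫⁻ s in Ioc a b, ENNReal.ofReal (e s)) + E b := by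
    intro a b hab
    rw [hE_def]
    rw [← lintegral_union measurableSet_Ioi (Set.Ioc_disjoint_Ioi le_rfl),
      Set.Ioc_union_Ioi_eq_Ioi hab]
  have hslab_ne : ∀ a b : ℝ, 0 ≤ a → a ≤ b →
      (∫⁻ s in Ioc a b, ENNReal.ofReal (e s)) ≠ ⊤ := by
    intro a b ha hab
    have h := hsplit a b hab
    have h2 := hEne a ha
    intro hT; rw [h, hT] at h2; simp at h2
  have hslabM : ∀ a b : ℝ, 0 ≤ a → a ≤ b →
      (∫⁻ s in Ioc a b, ENNReal.ofReal (e s)) ≤ ENNReal.ofReal M * ENNReal.ofReal (b - a) := by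
    intro a b ha hab
    calc (∫⁻ s in Ioc a b, ENNReal.ofReal (e s))
        ≤ ∫⁻ _ in Ioc a b, ENNReal.ofReal M := by
          refine setLIntegral_mono measurable_const fun x hx => ?_
          exact ENNReal.ofReal_le_ofReal (hMt x (ha.trans hx.1.le))
      _ = ENNReal.ofReal M * ENNReal.ofReal (b - a) := by
          rw [setLIntegral_const, Real.volume_Ioc]
  have hslabL : ∀ (a b L : ℝ), 0 ≤ L → (∀ s ∈ Ioc a b, L ≤ e s) →
      ENNReal.ofReal L * ENNReal.ofReal (b - a) ≤ ∫⁻ s in Ioc a b, ENNReal.ofReal (e s) := by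
    intro a b L hL h
    rw [← Real.volume_Ioc, ← setLIntegral_const]
    refine lintegral_mono_ae ?_
    filter_upwards [ae_restrict_mem measurableSet_Ioc] with x hx
    exact ENNReal.ofReal_le_ofReal (h x hx)
  set F : ℝ → ℝ := fun t => (E t).toReal with hF_def
  have hFnonneg : ∀ t, 0 ≤ F t := fun t => ENNReal.toReal_nonneg
  have hFle : ∀ t : ℝ, 0 ≤ t → F t ≤ c * e t ^ 2 := by
    intro t ht
    exact ENNReal.toReal_le_of_le_ofReal (by positivity) (hint t ht)
  have hFmono : ∀ a b : ℝ, 0 ≤ a → a ≤ b → F b ≤ F a := fun a b ha hab =>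
    ENNReal.toReal_mono (hEne a ha) (hEmono a b hab)
  have hdiff : ∀ a b : ℝ, 0 ≤ a → a ≤ b →
      F a - F b = (∫⁻ s in Ioc a b, ENNReal.ofReal (e s)).toReal := by
    intro a b ha hab
    rw [hF_def]
    simp only
    rw [hsplit a b hab, ENNReal.toReal_add (hslab_ne a b ha hab) (hEne b (ha.trans hab))]
    ring
  have hFcont : ContinuousOn F (Ici 0) := by
    have hkey : ∀ a b : ℝ, 0 ≤ a → a ≤ b → F a - F b ≤ M * (b - a) := by
      intro a b ha hab
      rw [hdiff a b ha hab]
      have h1 := ENNReal.toReal_mono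
        (ENNReal.mul_ne_top ENNReal.ofReal_ne_top ENNReal.ofReal_ne_top)
        (hslabM a b ha hab)
      rwa [ENNReal.toReal_mul, ENNReal.toReal_ofReal hM0,
        ENNReal.toReal_ofReal (by linarith)] at h1
    have : LipschitzOnWith (Real.toNNReal M) F (Ici 0) := by
      refine LipschitzOnWith.of_dist_le_mul fun x hx y hy => ?_
      have key : ∀ a b : ℝ, 0 ≤ a → a ≤ b → dist (F a) (F b) ≤ M * dist a b := by
        intro a b ha hab
        rw [Real.dist_eq, Real.dist_eq, abs_of_nonneg (by linarith [hFmono a b ha hab]),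
          abs_of_nonpos (by linarith)]
        have := hkey a b ha hab; linarith
      rw [Real.coe_toNNReal M hM0]
      rcases le_total x y with h | h
      · exact key x y hx h
      · rw [dist_comm, dist_comm x y]; exact key y x hy h
    exact this.continuousOn
  have hFtendsto : Tendsto F atTop (𝓝 0) := by
    have h1 : Tendsto (fun t => ENNReal.ofReal (c * e t ^ 2)) atTop (𝓝 0) := by
      have h0 : Tendsto (fun t => c * e t ^ 2) atTop (𝓝 (c * 0 ^ 2)) :=
        tendsto_const_nhds.mul (he_lim.pow 2)
      have h2 := (ENNReal.continuous_ofReal.tendsto _).comp h0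
      simpa [Function.comp_def] using h2
    have hE0 : Tendsto E atTop (𝓝 0) := by
      refine tendsto_of_tendsto_of_tendsto_of_le_of_le' tendsto_const_nhds h1 ?_ ?_
      · exact Eventually.of_forall fun t => zero_le
      · filter_upwards [eventually_ge_atTop (0:ℝ)] with t ht using hint t ht
    have h3 := (ENNReal.tendsto_toReal (by simp : (0:ℝ≥0∞) ≠ ⊤)).comp hE0
    simpa [Function.comp_def, hF_def] using h3
  have hstep' : ∀ a : ℝ, 0 ≤ a → ∃ b : ℝ, a ≤ b ∧ F b = F a / 4 ∧
      b - a ≤ 3 / 2 * Real.sqrt (c * F a) := by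
    intro a ha
    rcases eq_or_lt_of_le (hFnonneg a) with h0 | h0
    · exact ⟨a, le_rfl, by rw [← h0]; ring, by
        simpa using mul_nonneg (by norm_num : (0:ℝ) ≤ 3/2) (Real.sqrt_nonneg (c * F a))⟩
    · have h4 : (0:ℝ) < F a / 4 := by linarith
      obtain ⟨b0, hb0⟩ :=
        ((hFtendsto.eventually_lt_const h4).and (eventually_ge_atTop a)).exists_forall_of_atTop
      have hb0a : a ≤ b0 := (hb0 b0 le_rfl).2
      have hb0lt : F b0 < F a / 4 := (hb0 b0 le_rfl).1
      have hIVT := intermediate_value_Icc' hb0a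
        (hFcont.mono (Icc_subset_Ici_self.trans (Ici_subset_Ici.mpr ha)))
      obtain ⟨x, hxmem, hFx⟩ := hIVT ⟨hb0lt.le, by linarith⟩
      have hax : a ≤ x := hxmem.1
      have hx0 : (0:ℝ) ≤ x := ha.trans hax
      refine ⟨x, hax, hFx, ?_⟩
      set L : ℝ := Real.sqrt (F x / c) with hL_def
      have hLpos : 0 < L := Real.sqrt_pos.mpr (by rw [hFx]; positivity)
      have hLe : ∀ s ∈ Ioc a x, L ≤ e s := by
        intro s hs
        have hs0 : (0:ℝ) ≤ s := ha.trans hs.1.le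
        have h1 : F x ≤ F s := hFmono s x hs0 hs.2
        have h2 : F x / c ≤ e s ^ 2 := by
          have := hFle s hs0
          rw [div_le_iff₀ hc]
          nlinarith
        calc L ≤ Real.sqrt (e s ^ 2) := Real.sqrt_le_sqrt h2
          _ = e s := Real.sqrt_sq (he_nonneg s hs0)
      have h1 := hslabL a x L hLpos.le hLe
      have h2 : L * (x - a) ≤ F a - F x := by
        rw [hdiff a x ha hax]
        have h3 := ENNReal.toReal_mono (hslab_ne a x ha hax) h1
        rwa [ENNReal.toReal_mul, ENNReal.toReal_ofReal hLpos.le,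
          ENNReal.toReal_ofReal (by linarith)] at h3
      have hkey : L * (3 / 2 * Real.sqrt (c * F a)) = 3 / 4 * F a := by
        rw [hL_def, hFx]
        rw [show Real.sqrt (F a / 4 / c) * (3 / 2 * Real.sqrt (c * F a))
            = 3 / 2 * (Real.sqrt (F a / 4 / c) * Real.sqrt (c * F a)) from by ring,
          ← Real.sqrt_mul (by positivity)]
        have heq : F a / 4 / c * (c * F a) = (F a / 2) ^ 2 := by
          field_simp; ring
        rw [heq, Real.sqrt_sq (by linarith)]
        ring
      have h5 : L * (x - a) ≤ L * (3 / 2 * Real.sqrt (c * F a)) := by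
        rw [hkey, hFx] at *
        linarith
      exact le_of_mul_le_mul_left h5 hLpos
  choose! next hnext1 hnext2 hnext3 using hstep'
  set t : ℕ → ℝ := fun n => next^[n] 0 with ht_def
  have hF0 : 0 ≤ F 0 := hFnonneg 0
  have hinv : ∀ n : ℕ, 0 ≤ t n ∧ F (t n) = F 0 / 4 ^ n ∧
      t n ≤ 3 * Real.sqrt (c * F 0) * (1 - (1 / 2 : ℝ) ^ n) := by
    intro n
    induction n with
    | zero => simp [ht_def]
    | succ n ih =>
      obtain ⟨h0, hF, hle⟩ := ih
      rw [show t (n + 1) = next (t n) from Function.iterate_succ_apply' next n 0]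
      refine ⟨h0.trans (hnext1 _ h0), ?_, ?_⟩
      · rw [hnext2 _ h0, hF, pow_succ, div_div]
      · have h3 := hnext3 _ h0
        have hsq : Real.sqrt (c * F (t n)) = Real.sqrt (c * F 0) * (1 / 2 : ℝ) ^ n := by
          rw [hF]
          have heq2 : c * (F 0 / 4 ^ n) = (c * F 0) * ((1 / 2 : ℝ) ^ n) ^ 2 := by
            rw [show ((1 / 2 : ℝ) ^ n) ^ 2 = (1 / 4 : ℝ) ^ n from by
              rw [← pow_mul, mul_comm, pow_mul]; norm_num]
            field_simp
            rw [mul_assoc, ← mul_pow]; norm_num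
          rw [heq2, Real.sqrt_mul (by positivity), Real.sqrt_sq (by positivity)]
        rw [hsq] at h3
        have hp : ((1:ℝ)/2) ^ (n+1) = (1/2:ℝ)^n * (1/2) := pow_succ _ _
        have hs : 0 ≤ Real.sqrt (c * F 0) := Real.sqrt_nonneg _
        nlinarith [pow_nonneg (by norm_num : (0:ℝ) ≤ 1/2) n]
  have hsqF0 : Real.sqrt (c * F 0) ≤ c * M := by
    have he0 : 0 ≤ e 0 := he_nonneg 0 le_rfl
    have heM : e 0 ≤ M := hMt 0 le_rfl
    have hFle0 : F 0 ≤ c * e 0 ^ 2 := hFle 0 le_rfl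
    have h1 : c * F 0 ≤ (c * M) ^ 2 := by
      nlinarith [mul_le_mul heM heM he0 hM0, sq_nonneg c, mul_le_mul_of_nonneg_left hFle0 hc.le]
    calc Real.sqrt (c * F 0) ≤ Real.sqrt ((c * M) ^ 2) := Real.sqrt_le_sqrt h1
      _ = c * M := Real.sqrt_sq (by positivity)
  have hT0 : (0 : ℝ) ≤ 3 * c * M := by positivity
  have htle : ∀ n, t n ≤ 3 * c * M := by
    intro n
    have h := (hinv n).2.2
    have h1 : (0:ℝ) ≤ (1/2:ℝ)^n := by positivity
    nlinarith [Real.sqrt_nonneg (c * F 0)]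
  have hET : E (3 * c * M) = 0 := by
    have hle : ∀ n : ℕ, E (3 * c * M) ≤ ENNReal.ofReal (F 0 / 4 ^ n) := by
      intro n
      have h1 : E (3 * c * M) ≤ E (t n) := hEmono _ _ (htle n)
      have h2 : E (t n) = ENNReal.ofReal (F 0 / 4 ^ n) := by
        rw [← (hinv n).2.1, hF_def]
        simp only
        rw [ENNReal.ofReal_toReal (hEne _ (hinv n).1)]
      rwa [h2] at h1
    have hlim : Tendsto (fun n : ℕ => ENNReal.ofReal (F 0 / 4 ^ n)) atTop (𝓝 0) := by
      have h1 : Tendsto (fun n : ℕ => F 0 / 4 ^ n) atTop (𝓝 0) := by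
        have h0 := tendsto_pow_atTop_nhds_zero_of_lt_one (by norm_num : (0:ℝ) ≤ 1/4)
          (by norm_num : (1/4:ℝ) < 1)
        have h2 := h0.const_mul (F 0)
        simp only [mul_zero] at h2
        convert h2 using 2 with n
        rw [div_eq_mul_inv, one_div, inv_pow]
      have h2 := (ENNReal.continuous_ofReal.tendsto 0).comp h1
      simpa [Function.comp_def] using h2
    have h3 := ge_of_tendsto' hlim hle
    simpa using h3
  have hnull : volume ({s : ℝ | 0 < e s} ∩ Ioi (3 * c * M)) = 0 := by
    have haem : AEMeasurable (fun s => ENNReal.ofReal (e s))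
        (volume.restrict (Ioi (3 * c * M))) := by
      refine ENNReal.measurable_ofReal.comp_aemeasurable ?_
      exact (he_cont.mono (Ioi_subset_Ici hT0)).aemeasurable measurableSet_Ioi
    have hae := (lintegral_eq_zero_iff' haem).mp hET
    rw [← Measure.restrict_apply' measurableSet_Ioi]
    refine measure_mono_null ?_ (ae_iff.mp hae)
    intro s hs
    simp only [Set.mem_setOf_eq, Pi.zero_apply] at *
    exact ne_of_gt (ENNReal.ofReal_pos.mpr hs)
  have hsub : {t : ℝ | 0 ≤ t ∧ 0 < e t} ⊆
      Icc 0 (3 * c * M) ∪ ({s : ℝ | 0 < e s} ∩ Ioi (3 * c * M)) := by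
    intro x hx
    rcases le_or_gt x (3 * c * M) with h | h
    · exact Or.inl ⟨hx.1, h⟩
    · exact Or.inr ⟨hx.2, h⟩
  calc volume {t : ℝ | 0 ≤ t ∧ 0 < e t}
      ≤ volume (Icc 0 (3 * c * M) ∪ ({s : ℝ | 0 < e s} ∩ Ioi (3 * c * M))) :=
        measure_mono hsub
    _ ≤ volume (Icc 0 (3 * c * M)) + volume ({s : ℝ | 0 < e s} ∩ Ioi (3 * c * M)) :=
        measure_union_le _ _
    _ = ENNReal.ofReal (3 * c * M - 0) := by rw [hnull, Real.volume_Icc, add_zero]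
    _ ≤ ENNReal.ofReal (4 * c * M) := by
        apply ENNReal.ofReal_le_ofReal; nlinarith
end

section
/- Let κ ≥ 2 and let A ⊂ ℝ^κ be a compact set with finite (κ−2)-dimensional Hausdorff measure, H^{κ−2}(A) < ∞. Then for every η > 0 there exist finitely many open balls B₁, …, B_m, each of diameter less than η, whose union covers A and such that the (κ−1)-dimensional Hausdorff measure of the union of their boundary spheres satisfies H^{κ−1}(∂B₁ ∪ … ∪ ∂B_m) < η. -/
open MeasureTheory Metric Set
open scoped ENNReal

lemma aux_rpow_add_le (a b : ℝ≥0∞) {p : ℝ} (hp : 0 ≤ p) :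
    (a + b) ^ p ≤ 2 ^ p * (a ^ p + b ^ p) := by
  calc (a + b) ^ p ≤ (2 * max a b) ^ p := by
        apply ENNReal.rpow_le_rpow _ hp
        rw [two_mul]
        exact add_le_add (le_max_left a b) (le_max_right a b)
    _ = 2 ^ p * (max a b) ^ p := ENNReal.mul_rpow_of_nonneg _ _ hp
    _ ≤ 2 ^ p * (a ^ p + b ^ p) := by
        gcongr
        rcases le_total a b with h | h
        · rw [max_eq_right h]; exact le_add_self
        · rw [max_eq_left h]; exact self_le_add_right _ _

lemma aux_proj_lip {E : Type*} [NormedAddCommGroup E] [NormedSpace ℝ E] :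
    LipschitzOnWith 2 (fun x : E => ‖x‖⁻¹ • x) {x | 1 ≤ ‖x‖} := by
  apply LipschitzOnWith.of_dist_le_mul
  have key : ∀ x ∈ {x : E | 1 ≤ ‖x‖}, ∀ y ∈ {x : E | 1 ≤ ‖x‖}, ‖y‖ ≤ ‖x‖ →
      dist (‖x‖⁻¹ • x) (‖y‖⁻¹ • y) ≤ 2 * dist x y := by
    intro x hx y hy hxy
    simp only [mem_setOf_eq] at hx hy
    have hx0 : 0 < ‖x‖ := lt_of_lt_of_le one_pos hx
    have hy0 : 0 < ‖y‖ := lt_of_lt_of_le one_pos hy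
    have h1 : dist (‖x‖⁻¹ • x) (‖y‖⁻¹ • y) ≤
        dist (‖x‖⁻¹ • x) (‖x‖⁻¹ • y) + dist (‖x‖⁻¹ • y) (‖y‖⁻¹ • y) := dist_triangle _ _ _
    have h2 : dist (‖x‖⁻¹ • x) (‖x‖⁻¹ • y) = ‖x‖⁻¹ * dist x y := by
      rw [dist_smul₀, Real.norm_eq_abs, abs_of_pos (by positivity)]
    have h3 : dist (‖x‖⁻¹ • y) (‖y‖⁻¹ • y) = |‖x‖⁻¹ - ‖y‖⁻¹| * ‖y‖ := by
      rw [dist_eq_norm, ← sub_smul, norm_smul, Real.norm_eq_abs]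
    have h4 : |‖x‖⁻¹ - ‖y‖⁻¹| * ‖y‖ ≤ ‖x‖⁻¹ * dist x y := by
      have habs : |‖x‖⁻¹ - ‖y‖⁻¹| = ‖y‖⁻¹ - ‖x‖⁻¹ := by
        rw [abs_sub_comm, abs_of_nonneg (sub_nonneg.2 (inv_anti₀ hy0 hxy))]
      rw [habs]
      have heq : (‖y‖⁻¹ - ‖x‖⁻¹) * ‖y‖ = (‖x‖ - ‖y‖) * ‖x‖⁻¹ := by
        field_simp
      rw [heq]
      have hd : ‖x‖ - ‖y‖ ≤ dist x y := by
        rw [dist_eq_norm]; exact norm_sub_norm_le x y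
      calc (‖x‖ - ‖y‖) * ‖x‖⁻¹ ≤ dist x y * ‖x‖⁻¹ :=
            mul_le_mul_of_nonneg_right hd (by positivity)
        _ = ‖x‖⁻¹ * dist x y := mul_comm _ _
    have hinv1 : ‖x‖⁻¹ ≤ 1 := inv_le_one_of_one_le₀ hx
    calc dist (‖x‖⁻¹ • x) (‖y‖⁻¹ • y) ≤ ‖x‖⁻¹ * dist x y + ‖x‖⁻¹ * dist x y := by
          rw [h2] at h1; exact h1.trans (by rw [h3]; gcongr)
      _ = 2 * (‖x‖⁻¹ * dist x y) := by ring
      _ ≤ 2 * (1 * dist x y) := by gcongr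
      _ = 2 * dist x y := by ring
  intro x hx y hy
  rcases le_total ‖y‖ ‖x‖ with h | h
  · simpa using key x hx y hy h
  · rw [dist_comm, dist_comm x y]
    simpa using key y hy x hx h

lemma aux_pi_face_lt_top (n : ℕ) (i : Fin (n+1)) (c : ℝ) :
    μH[(n:ℝ)] ((fun y : Fin n → ℝ => Fin.insertNth (α := fun _ => ℝ) i c y) '' closedBall 0 1) < ⊤ := by
  have hiso : Isometry (fun y : Fin n → ℝ => Fin.insertNth (α := fun _ => ℝ) i c y) := by
    apply Isometry.of_dist_eq
    intro y z
    apply le_antisymm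
    · apply (dist_pi_le_iff dist_nonneg).2
      intro b
      rcases eq_or_ne b i with rfl | hb
      · simpa using dist_nonneg
      · obtain ⟨j, rfl⟩ := Fin.exists_succAbove_eq hb
        simp only [Fin.insertNth_apply_succAbove]
        exact dist_le_pi_dist y z j
    · apply (dist_pi_le_iff dist_nonneg).2
      intro j
      have := dist_le_pi_dist (Fin.insertNth (α := fun _ => ℝ) i c y) (i.insertNth c z) (i.succAbove j)
      simpa [Fin.insertNth_apply_succAbove] using this
  rw [hiso.hausdorffMeasure_image (Or.inl (by positivity))]
  have hvol : μH[(n:ℝ)] (closedBall (0 : Fin n → ℝ) 1) = volume (closedBall (0 : Fin n → ℝ) 1) := by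
    have := hausdorffMeasure_pi_real (ι := Fin n)
    rw [Fintype.card_fin] at this
    rw [this]
  rw [hvol]
  exact (isCompact_closedBall 0 1).measure_lt_top

lemma aux_pi_sphere_lt_top (n : ℕ) :
    μH[(n:ℝ)] (sphere (0 : Fin (n+1) → ℝ) 1) < ⊤ := by
  have hsub : sphere (0 : Fin (n+1) → ℝ) 1 ⊆
      ⋃ i : Fin (n+1), ⋃ c ∈ ({1, -1} : Finset ℝ),
        (fun y : Fin n → ℝ => Fin.insertNth (α := fun _ => ℝ) i c y) '' closedBall 0 1 := by
    intro y hy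
    have hnorm : ‖y‖ = 1 := by simpa using hy
    obtain ⟨i, -, hi⟩ := Finset.exists_mem_eq_sup (Finset.univ : Finset (Fin (n+1)))
      Finset.univ_nonempty (fun b => ‖y b‖₊)
    have hyi : ‖y i‖ = 1 := by
      have h1 : ‖y‖ = ‖y i‖ := by
        rw [Pi.norm_def, hi, coe_nnnorm]
      rw [← h1, hnorm]
    have hc : y i ∈ ({1, -1} : Finset ℝ) := by
      rcases abs_eq (by norm_num : (0:ℝ) ≤ 1) |>.1 (by rwa [Real.norm_eq_abs] at hyi) with h | h
      · simp [h]
      · simp [h]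
    refine mem_iUnion.2 ⟨i, mem_iUnion₂.2 ⟨y i, hc, ?_⟩⟩
    refine ⟨i.removeNth y, ?_, Fin.insertNth_self_removeNth i y⟩
    rw [mem_closedBall_zero_iff]
    apply (pi_norm_le_iff_of_nonneg (by norm_num)).2
    intro j
    calc ‖i.removeNth y j‖ = ‖y (i.succAbove j)‖ := rfl
      _ ≤ ‖y‖ := norm_le_pi_norm y _
      _ = 1 := hnorm
  refine lt_of_le_of_lt (measure_mono hsub) ?_
  refine lt_of_le_of_lt (measure_iUnion_fintype_le _ _) ?_
  refine ENNReal.sum_lt_top.2 fun i _ => ?_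
  refine lt_of_le_of_lt (measure_biUnion_finset_le _ _) ?_
  exact ENNReal.sum_lt_top.2 fun c _ => aux_pi_face_lt_top n i c

lemma aux_coord_le (n : ℕ) (z : EuclideanSpace ℝ (Fin n)) (i : Fin n) : |z i| ≤ ‖z‖ := by
  rw [EuclideanSpace.norm_eq]
  have h1 : |z i| = Real.sqrt (‖z i‖ ^ 2) := by
    rw [Real.sqrt_sq_eq_abs, Real.norm_eq_abs, abs_abs]
  rw [h1]
  apply Real.sqrt_le_sqrt
  exact Finset.single_le_sum (f := fun j => ‖z j‖ ^ 2) (fun j _ => by positivity) (Finset.mem_univ i)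

lemma aux_eucl_sphere_lt_top {κ : ℕ} (hκ : 1 ≤ κ) :
    μH[(κ:ℝ)-1] (sphere (0 : EuclideanSpace ℝ (Fin κ)) 1) < ⊤ := by
  obtain ⟨n, rfl⟩ : ∃ n, κ = n + 1 := ⟨κ - 1, by omega⟩
  have hexp : ((n+1:ℕ):ℝ) - 1 = (n:ℝ) := by push_cast; ring
  rw [hexp]
  set E := EuclideanSpace ℝ (Fin (n+1)) with hE
  let L : (Fin (n+1) → ℝ) ≃L[ℝ] E := (EuclideanSpace.equiv (Fin (n+1)) ℝ).symm
  -- the image of the sup-sphere under L lands in {1 ≤ ‖·‖}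
  have himg : L '' sphere (0 : Fin (n+1) → ℝ) 1 ⊆ {x : E | 1 ≤ ‖x‖} := by
    rintro - ⟨y, hy, rfl⟩
    have hy1 : ‖y‖ = 1 := by simpa using hy
    obtain ⟨i, -, hi⟩ := Finset.exists_mem_eq_sup (Finset.univ : Finset (Fin (n+1)))
      Finset.univ_nonempty (fun b => ‖y b‖₊)
    have h1 : ‖y i‖ = 1 := by
      have : ‖y‖ = ‖y i‖ := by rw [Pi.norm_def, hi, coe_nnnorm]
      rw [← this, hy1]
    have h2 : |((L y : E)) i| = ‖y i‖ := by
      rw [Real.norm_eq_abs]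
      rfl
    have := aux_coord_le (n+1) (L y) i
    simp only [mem_setOf_eq]
    rw [h2, h1] at this
    exact this
  -- the Euclidean sphere is contained in proj '' (L '' supsphere)
  have hsub : sphere (0 : E) 1 ⊆
      (fun x : E => ‖x‖⁻¹ • x) '' (L '' sphere (0 : Fin (n+1) → ℝ) 1) := by
    intro z hz
    have hz1 : ‖z‖ = 1 := by simpa using hz
    have hz0 : z ≠ 0 := by intro h; rw [h] at hz1; simp at hz1
    set w : Fin (n+1) → ℝ := L.symm z with hw
    have hw0 : w ≠ 0 := by
      intro h
      apply hz0
      have : L w = z := L.apply_symm_apply z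
      rw [h] at this
      simpa using this.symm
    have ht0 : 0 < ‖w‖ := norm_pos_iff.2 hw0
    refine ⟨L (‖w‖⁻¹ • w), ⟨‖w‖⁻¹ • w, ?_, rfl⟩, ?_⟩
    · simp only [mem_sphere_iff_norm, sub_zero, norm_smul, Real.norm_eq_abs,
        abs_of_pos (inv_pos.2 ht0)]
      field_simp
    · have hLw : L (‖w‖⁻¹ • w) = ‖w‖⁻¹ • z := by
        rw [_root_.map_smul, L.apply_symm_apply]
      rw [hLw]
      have hnorm : ‖(‖w‖⁻¹ • z : E)‖ = ‖w‖⁻¹ := by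
        rw [norm_smul, Real.norm_eq_abs, abs_of_pos (inv_pos.2 ht0), hz1, mul_one]
      show ‖(‖w‖⁻¹ • z : E)‖⁻¹ • (‖w‖⁻¹ • z) = z
      rw [hnorm, inv_inv, smul_smul, mul_inv_cancel₀ ht0.ne', one_smul]
  -- Lipschitz bounds
  have hL : LipschitzWith ‖(L : (Fin (n+1) → ℝ) →L[ℝ] E)‖₊ L := L.lipschitz
  have hnn : (0:ℝ) ≤ (n:ℝ) := Nat.cast_nonneg n
  calc μH[(n:ℝ)] (sphere (0 : E) 1)
      ≤ μH[(n:ℝ)] ((fun x : E => ‖x‖⁻¹ • x) '' (L '' sphere (0 : Fin (n+1) → ℝ) 1)) :=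
        measure_mono hsub
    _ ≤ (2:ℝ≥0∞) ^ (n:ℝ) * μH[(n:ℝ)] (L '' sphere (0 : Fin (n+1) → ℝ) 1) := by
        have := (aux_proj_lip.mono himg).hausdorffMeasure_image_le hnn
        simpa using this
    _ ≤ (2:ℝ≥0∞) ^ (n:ℝ) * ((‖(L : (Fin (n+1) → ℝ) →L[ℝ] E)‖₊ : ℝ≥0∞) ^ (n:ℝ) *
          μH[(n:ℝ)] (sphere (0 : Fin (n+1) → ℝ) 1)) := by
        gcongr
        exact hL.hausdorffMeasure_image_le hnn _
    _ < ⊤ := by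
        apply ENNReal.mul_lt_top
        · exact ENNReal.rpow_lt_top_of_nonneg hnn (by simp)
        apply ENNReal.mul_lt_top
        · exact ENNReal.rpow_lt_top_of_nonneg hnn (by simp)
        · exact aux_pi_sphere_lt_top n

lemma aux_sphere_scale {κ : ℕ} {d : ℝ} (hd : 0 ≤ d) (x : EuclideanSpace ℝ (Fin κ)) {r : ℝ}
    (hr : 0 < r) :
    μH[d] (sphere x r) ≤
      ENNReal.ofReal r ^ d * μH[d] (sphere (0 : EuclideanSpace ℝ (Fin κ)) 1) := by
  have himg : sphere x r = (fun z : EuclideanSpace ℝ (Fin κ) => x + r • z) '' sphere 0 1 := by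
    apply Subset.antisymm
    · intro z hz
      have hz' : ‖z - x‖ = r := by rwa [mem_sphere_iff_norm] at hz
      refine ⟨r⁻¹ • (z - x), ?_, ?_⟩
      · rw [mem_sphere_iff_norm, sub_zero, norm_smul, Real.norm_eq_abs,
          abs_of_pos (inv_pos.2 hr), hz', inv_mul_cancel₀ hr.ne']
      · show x + r • r⁻¹ • (z - x) = z
        rw [smul_smul, mul_inv_cancel₀ hr.ne', one_smul]
        abel
    · rintro - ⟨w, hw, rfl⟩
      have hw' : ‖w‖ = 1 := by simpa using hw
      rw [mem_sphere_iff_norm]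
      show ‖x + r • w - x‖ = r
      rw [add_sub_cancel_left, norm_smul, Real.norm_eq_abs, abs_of_pos hr, hw', mul_one]
  have hlip : LipschitzWith r.toNNReal (fun z : EuclideanSpace ℝ (Fin κ) => x + r • z) := by
    apply LipschitzWith.of_dist_le_mul
    intro a b
    have : dist (x + r • a) (x + r • b) = r * dist a b := by
      rw [dist_eq_norm, dist_eq_norm]
      have : x + r • a - (x + r • b) = r • (a - b) := by
        rw [smul_sub]; abel
      rw [this, norm_smul, Real.norm_eq_abs, abs_of_pos hr]
    rw [this, Real.coe_toNNReal _ hr.le]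
  have := hlip.hausdorffMeasure_image_le hd (sphere (0 : EuclideanSpace ℝ (Fin κ)) 1)
  rw [himg]
  refine this.trans (le_of_eq ?_)
  congr 1


/-- **Lemma A.8 (covering estimate).** A compact set `A ⊆ ℝ^κ` (`κ ≥ 2`) with finite
`(κ−2)`-dimensional Hausdorff measure can, for every `η > 0`, be covered by finitely
many open balls of diameter less than `η` such that the union of their boundary spheres
has `(κ−1)`-dimensional Hausdorff measure less than `η`. -/
theorem ball_cover_with_small_boundary
    {κ : ℕ} (hκ : 2 ≤ κ)
    (Aset : Set (EuclideanSpace ℝ (Fin κ))) (hcpt : IsCompact Aset)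
    (hH : μH[(κ : ℝ) - 2] Aset < ⊤)
    (η : ℝ) (hη : 0 < η) :
    ∃ (m : ℕ) (ctr : Fin m → EuclideanSpace ℝ (Fin κ)) (r : Fin m → ℝ),
      (∀ j, 0 < r j) ∧
      (∀ j, Metric.diam (ball (ctr j) (r j)) < η) ∧
      Aset ⊆ ⋃ j, ball (ctr j) (r j) ∧
      μH[(κ : ℝ) - 1] (⋃ j, sphere (ctr j) (r j)) < ENNReal.ofReal η := by
  classical
  have hκ2 : (2:ℝ) ≤ (κ:ℝ) := by exact_mod_cast hκ
  have hq0 : (0:ℝ) ≤ (κ:ℝ) - 2 := by linarith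
  have hp1 : (1:ℝ) ≤ (κ:ℝ) - 1 := by linarith
  have hp0 : (0:ℝ) < (κ:ℝ) - 1 := by linarith
  have hpq : (κ:ℝ) - 1 = 1 + ((κ:ℝ) - 2) := by ring
  set c := μH[(κ:ℝ)-1] (sphere (0 : EuclideanSpace ℝ (Fin κ)) 1) with hc
  have hcfin : c ≠ ⊤ := (aux_eucl_sphere_lt_top (by omega)).ne
  set M := μH[(κ:ℝ)-2] Aset + 1 with hMdef
  have hMfin : M ≠ ⊤ := ENNReal.add_ne_top.2 ⟨hH.ne, ENNReal.one_ne_top⟩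
  set D := 2 ^ ((κ:ℝ)-1) * c * (M + 1) with hD
  have h2top : (2:ℝ≥0∞) ^ ((κ:ℝ)-1) ≠ ⊤ :=
    ENNReal.rpow_ne_top_of_nonneg hp0.le (by simp)
  have hDfin : D ≠ ⊤ :=
    ENNReal.mul_ne_top (ENNReal.mul_ne_top h2top hcfin)
      (ENNReal.add_ne_top.2 ⟨hMfin, ENNReal.one_ne_top⟩)
  set θ := min (min (η / (2 * (D.toReal + 1))) 1) (η/8) with hθdef
  have hDt : (0:ℝ) < D.toReal + 1 := by positivity
  have hθpos : 0 < θ := by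
    apply lt_min (lt_min _ one_pos) (by linarith)
    positivity
  have hθ1 : θ ≤ 1 := le_trans (min_le_left _ _) (min_le_right _ _)
  have hθη : θ ≤ η/8 := min_le_right _ _
  have hθD : ENNReal.ofReal θ * D < ENNReal.ofReal η := by
    calc ENNReal.ofReal θ * D ≤ ENNReal.ofReal θ * ENNReal.ofReal (D.toReal + 1) := by
          gcongr
          calc D = ENNReal.ofReal D.toReal := (ENNReal.ofReal_toReal hDfin).symm
            _ ≤ ENNReal.ofReal (D.toReal + 1) := ENNReal.ofReal_le_ofReal (by linarith)
      _ = ENNReal.ofReal (θ * (D.toReal + 1)) := (ENNReal.ofReal_mul hθpos.le).symm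
      _ ≤ ENNReal.ofReal (η/2) := by
          apply ENNReal.ofReal_le_ofReal
          have h1 : θ ≤ η / (2*(D.toReal+1)) := le_trans (min_le_left _ _) (min_le_left _ _)
          calc θ * (D.toReal+1) ≤ η / (2*(D.toReal+1)) * (D.toReal+1) := by
                apply mul_le_mul_of_nonneg_right h1 hDt.le
            _ = η/2 := by field_simp
      _ < ENNReal.ofReal η := (ENNReal.ofReal_lt_ofReal_iff hη).2 (by linarith)
  -- extract a good countable cover from the Hausdorff measure
  have hinf : (⨅ (t : ℕ → Set (EuclideanSpace ℝ (Fin κ))) (_ : Aset ⊆ ⋃ n, t n)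
      (_ : ∀ n, EMetric.diam (t n) ≤ ENNReal.ofReal θ),
      ∑' n, ⨆ _ : (t n).Nonempty, EMetric.diam (t n) ^ ((κ:ℝ)-2)) < M := by
    have hle := le_iSup₂ (f := fun (rr : ℝ≥0∞) (_ : 0 < rr) =>
        ⨅ (t : ℕ → Set (EuclideanSpace ℝ (Fin κ))) (_ : Aset ⊆ ⋃ n, t n)
          (_ : ∀ n, EMetric.diam (t n) ≤ rr),
          ∑' n, ⨆ _ : (t n).Nonempty, EMetric.diam (t n) ^ ((κ:ℝ)-2))
        (ENNReal.ofReal θ) (ENNReal.ofReal_pos.2 hθpos)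
    replace hle := hle.trans_eq (MeasureTheory.Measure.hausdorffMeasure_apply ((κ:ℝ)-2) Aset).symm
    exact lt_of_le_of_lt hle (ENNReal.lt_add_right hH.ne one_ne_zero)
  obtain ⟨t, ht⟩ := iInf_lt_iff.1 hinf
  obtain ⟨hts, ht⟩ := iInf_lt_iff.1 ht
  obtain ⟨htd, hsum⟩ := iInf_lt_iff.1 ht
  -- the balls
  set x : ℕ → EuclideanSpace ℝ (Fin κ) :=
    fun n => if h : (t n).Nonempty then h.choose else 0 with hx
  set r : ℕ → ℝ := fun n => (EMetric.diam (t n)).toReal + θ/2/2^n with hrdef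
  have hdne : ∀ n, EMetric.diam (t n) ≠ ⊤ :=
    fun n => ((htd n).trans_lt ENNReal.ofReal_lt_top).ne
  have hdle : ∀ n, (EMetric.diam (t n)).toReal ≤ θ :=
    fun n => ENNReal.toReal_le_of_le_ofReal hθpos.le (htd n)
  have hεpos : ∀ n : ℕ, (0:ℝ) < θ/2/2^n := fun n => by positivity
  have hεθ : ∀ n : ℕ, θ/2/2^n ≤ θ := by
    intro n
    rw [div_div]
    apply div_le_self hθpos.le
    have h1 : (1:ℝ) ≤ 2^n := one_le_pow₀ (by norm_num)
    linarith
  have hrpos : ∀ n, 0 < r n :=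
    fun n => add_pos_of_nonneg_of_pos ENNReal.toReal_nonneg (hεpos n)
  have hrθ : ∀ n, r n ≤ 2*θ := fun n => by
    have := hdle n; have := hεθ n
    simp only [hrdef]; linarith
  have hcov : ∀ n, t n ⊆ ball (x n) (r n) := by
    intro n y hy
    have hne : (t n).Nonempty := ⟨y, hy⟩
    have hxmem : x n ∈ t n := by
      simp only [hx, dif_pos hne]; exact hne.choose_spec
    rw [mem_ball]
    have hed : edist y (x n) ≤ EMetric.diam (t n) := EMetric.edist_le_diam_of_mem hy hxmem
    have h1 : dist y (x n) ≤ (EMetric.diam (t n)).toReal := by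
      rw [dist_edist]
      exact ENNReal.toReal_mono (hdne n) hed
    have := hεpos n
    simp only [hrdef]; linarith
  have hcover : Aset ⊆ ⋃ n, ball (x n) (r n) := hts.trans (iUnion_mono hcov)
  obtain ⟨s, hs⟩ := hcpt.elim_finite_subcover (fun n => ball (x n) (r n))
    (fun n => isOpen_ball) hcover
  refine ⟨s.card, fun j => x (s.equivFin.symm j), fun j => r (s.equivFin.symm j),
    fun j => hrpos _, ?_, ?_, ?_⟩
  · intro j
    calc Metric.diam (ball (x (s.equivFin.symm j) : EuclideanSpace ℝ (Fin κ))
          (r (s.equivFin.symm j))) ≤ 2 * r (s.equivFin.symm j) := diam_ball (hrpos _).le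
      _ ≤ 2 * (2*θ) := by have := hrθ (s.equivFin.symm j : ℕ); linarith
      _ < η := by have := hθη; linarith
  · intro a ha
    obtain ⟨n, hn, hmem⟩ := mem_iUnion₂.1 (hs ha)
    refine mem_iUnion.2 ⟨s.equivFin ⟨n, hn⟩, ?_⟩
    simpa only [Equiv.symm_apply_apply] using hmem
  · -- the measure estimate
    have hsub2 : (⋃ j, sphere (x (s.equivFin.symm j) : EuclideanSpace ℝ (Fin κ))
        (r (s.equivFin.symm j))) ⊆ ⋃ n : ℕ, sphere (x n) (r n) :=
      iUnion_subset fun j => subset_iUnion (fun n => sphere (x n) (r n)) _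
    -- per-term bound
    have hterm : ∀ n : ℕ, μH[(κ:ℝ)-1] (sphere (x n) (r n)) ≤
        2 ^ ((κ:ℝ)-1) *
          (ENNReal.ofReal θ * (⨆ _ : (t n).Nonempty, EMetric.diam (t n) ^ ((κ:ℝ)-2))
            + ENNReal.ofReal (θ/2/2^n)) * c := by
      intro n
      set d := EMetric.diam (t n) with hd
      set e := ENNReal.ofReal (θ/2/2^n) with he
      have hofr : ENNReal.ofReal (r n) = d + e := by
        simp only [hrdef]
        rw [ENNReal.ofReal_add ENNReal.toReal_nonneg (hεpos n).le,
          ENNReal.ofReal_toReal (hdne n)]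
      have h1 : μH[(κ:ℝ)-1] (sphere (x n) (r n)) ≤ ENNReal.ofReal (r n) ^ ((κ:ℝ)-1) * c :=
        aux_sphere_scale hp0.le (x n) (hrpos n)
      have h2 : ENNReal.ofReal (r n) ^ ((κ:ℝ)-1) ≤ 2 ^ ((κ:ℝ)-1) *
          (d ^ ((κ:ℝ)-1) + e ^ ((κ:ℝ)-1)) := by
        rw [hofr]; exact aux_rpow_add_le d e hp0.le
      have h3 : d ^ ((κ:ℝ)-1) ≤
          ENNReal.ofReal θ * (⨆ _ : (t n).Nonempty, d ^ ((κ:ℝ)-2)) := by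
        by_cases hne : (t n).Nonempty
        · rw [iSup_pos hne]
          by_cases hd0 : d = 0
          · rw [hd0, ENNReal.zero_rpow_of_pos hp0]; exact zero_le
          · rw [hpq, ENNReal.rpow_add _ _ hd0 (hdne n), ENNReal.rpow_one]
            gcongr
            exact htd n
        · rw [iSup_neg hne]
          have ht0 : t n = ∅ := not_nonempty_iff_eq_empty.1 hne
          rw [hd, ht0, show EMetric.diam (∅ : Set (EuclideanSpace ℝ (Fin κ))) = 0 from EMetric.diam_empty, ENNReal.zero_rpow_of_pos hp0]
          simp
      have h4 : e ^ ((κ:ℝ)-1) ≤ e := by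
        have he1 : e ≤ 1 := by
          rw [he, ← ENNReal.ofReal_one]
          exact ENNReal.ofReal_le_ofReal ((hεθ n).trans hθ1)
        calc e ^ ((κ:ℝ)-1) ≤ e ^ (1:ℝ) :=
              ENNReal.rpow_le_rpow_of_exponent_ge he1 hp1
          _ = e := ENNReal.rpow_one e
      calc μH[(κ:ℝ)-1] (sphere (x n) (r n)) ≤ ENNReal.ofReal (r n) ^ ((κ:ℝ)-1) * c := h1
        _ ≤ 2 ^ ((κ:ℝ)-1) * (d ^ ((κ:ℝ)-1) + e ^ ((κ:ℝ)-1)) * c := mul_le_mul_left h2 c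
        _ ≤ 2 ^ ((κ:ℝ)-1) *
            (ENNReal.ofReal θ * (⨆ _ : (t n).Nonempty, d ^ ((κ:ℝ)-2)) + e) * c :=
            mul_le_mul_left (mul_le_mul_right (add_le_add h3 h4) _) c
    -- sum the tail bound
    have hesum : (∑' n : ℕ, ENNReal.ofReal (θ/2/2^n)) = ENNReal.ofReal θ := by
      rw [← ENNReal.ofReal_tsum_of_nonneg (fun n => (hεpos n).le) ?_]
      · congr 1
        exact tsum_geometric_two' θ
      · have : (fun n : ℕ => θ/2/2^n) = fun n : ℕ => (θ/2) * (1/2)^n := by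
          funext n
          rw [div_pow, one_pow, mul_one_div, div_div]
        rw [this]
        exact (summable_geometric_two).mul_left _
    calc μH[(κ:ℝ)-1] (⋃ j, sphere (x (s.equivFin.symm j) : EuclideanSpace ℝ (Fin κ))
          (r (s.equivFin.symm j)))
        ≤ μH[(κ:ℝ)-1] (⋃ n : ℕ, sphere (x n) (r n)) := measure_mono hsub2
      _ ≤ ∑' n : ℕ, μH[(κ:ℝ)-1] (sphere (x n) (r n)) := measure_iUnion_le _
      _ ≤ ∑' n : ℕ, 2 ^ ((κ:ℝ)-1) *
            (ENNReal.ofReal θ * (⨆ _ : (t n).Nonempty, EMetric.diam (t n) ^ ((κ:ℝ)-2))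
              + ENNReal.ofReal (θ/2/2^n)) * c := ENNReal.tsum_le_tsum hterm
      _ = 2 ^ ((κ:ℝ)-1) * c *
            (ENNReal.ofReal θ *
              (∑' n : ℕ, ⨆ _ : (t n).Nonempty, EMetric.diam (t n) ^ ((κ:ℝ)-2))
              + ∑' n : ℕ, ENNReal.ofReal (θ/2/2^n)) := by
          rw [ENNReal.tsum_mul_right, ENNReal.tsum_mul_left, ENNReal.tsum_add,
            ENNReal.tsum_mul_left]
          ring
      _ ≤ 2 ^ ((κ:ℝ)-1) * c * (ENNReal.ofReal θ * M + ENNReal.ofReal θ) := by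
          rw [hesum]
          gcongr
      _ = ENNReal.ofReal θ * D := by rw [hD]; ring
      _ < ENNReal.ofReal η := hθD
end
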